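/- arXiv:2009.06906 — 4 statements merged into one kernel-verified Lean document; each statement's English description precedes it below -/
import Mathlib

section
/- Let (i_1,...,i_N) with N = n(n+1)/2 be a reduced word of the longest element w_0 of S_{n+1}. Then there exist unique indices 1 ≤ d_1 < d_2 < ⋯ < d_n ≤ N such that (i_{d_1}, i_{d_2}, ..., i_{d_n}) = (n, n-1, ..., 2, 1). -/
/-!
Follow the strand that starts at the top position `n` through the wiring diagram of the word:
after `t` letters it sits at `topWire n l t = (s_{i_1} ⋯ s_{i_t})⁻¹ n`. Along a reduced word every
prefix has exactly `t` inversions, so each letter is an ascent of the prefix before it; hence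
the strand never sits at the lower position `c` of a letter `c` and never moves up. Since it
travels from `n` to `w₀⁻¹ n = 0`, it steps down exactly once from each `n - j`, and that step
happens at a letter `n - 1 - j`: these steps form the chain. Conversely, along any chain
`d` the strand is never at the letter's position, which pins `topWire n l (d j) = n - j`, so
`d j` is the step of the strand away from `n - j`.
-/

open Equiv List

/-- The simple transposition `s_{c+1}` (0-based: swaps `c` and `c+1` in `Fin (n+1)`). -/
def simpleT (n c : ℕ) : Equiv.Perm (Fin (n + 1)) :=
  if h : c + 1 ≤ n then Equiv.swap ⟨c, by omega⟩ ⟨c + 1, by omega⟩ else 1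

/-- `l` is a word for the permutation `w` in `S_{n+1}`, with 0-based letters in `[0, n)`. -/
def IsWord (n : ℕ) (w : Equiv.Perm (Fin (n + 1))) (l : List ℕ) : Prop :=
  (∀ c ∈ l, c < n) ∧ (l.map (simpleT n)).prod = w

/-- The Coxeter length of `w`: minimal length of a word for `w`. -/
noncomputable def coxLen (n : ℕ) (w : Equiv.Perm (Fin (n + 1))) : ℕ :=
  sInf {r | ∃ l : List ℕ, l.length = r ∧ IsWord n w l}

/-- `l` is a reduced word of `w`. -/
def IsReducedWord (n : ℕ) (w : Equiv.Perm (Fin (n + 1))) (l : List ℕ) : Prop :=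
  IsWord n w l ∧ l.length = coxLen n w

/-- The longest element of `S_{n+1}`, sending (0-based) `i` to `n - i`. -/
def w0 (n : ℕ) : Equiv.Perm (Fin (n + 1)) :=
  ⟨Fin.rev, Fin.rev, Fin.rev_rev, Fin.rev_rev⟩

/-- The word poset relation of the word `l`: transitive closure of
`j ≤ k` and `|l_j - l_k| ≤ 1`. -/
def wordRel (l : List ℕ) : Fin l.length → Fin l.length → Prop :=
  Relation.ReflTransGen (fun j k => j ≤ k ∧ l.get j ≤ l.get k + 1 ∧ l.get k ≤ l.get j + 1)

/-- A 2-move (commutation). -/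
def CommMove (l l' : List ℕ) : Prop :=
  ∃ (u v : List ℕ) (a b : ℕ), (a + 1 < b ∨ b + 1 < a) ∧
    l = u ++ a :: b :: v ∧ l' = u ++ b :: a :: v

/-- Equivalence of words by sequences of 2-moves. -/
def CommEquiv : List ℕ → List ℕ → Prop := Relation.ReflTransGen CommMove

section Sequences

variable {p : ℕ → ℕ}

theorem apply_add_le_apply_add (hp : ∀ t, p (t + 1) ≤ p t + 1) (a k : ℕ) :
    p (a + k) ≤ p a + k := by
  induction k with
  | zero => rfl
  | succ k ih => exact (hp (a + k)).trans (by omega)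

theorem exists_lt_apply_eq_add_one_of_le_add_one (hp : ∀ t, p t ≤ p (t + 1) + 1) {a T : ℕ}
    (h0 : a < p 0) (hT : p T ≤ a) : ∃ t < T, p t = a + 1 ∧ p (t + 1) = a := by
  classical
  have hex : ∃ t, p t ≤ a := ⟨T, hT⟩
  obtain ⟨t, ht⟩ := Nat.exists_eq_add_one_of_ne_zero (Nat.find_pos hex |>.2 (by omega)).ne'
  have hfirst : p (t + 1) ≤ a := ht ▸ Nat.find_spec hex
  have hbefore : ¬ p t ≤ a := Nat.find_min hex (by omega)
  have hle : t + 1 ≤ T := ht ▸ Nat.find_min' hex hT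
  have := hp t
  exact ⟨t, by omega, by omega, by omega⟩

theorem Antitone.eq_of_apply_succ_lt (hp : Antitone p) {s t : ℕ} (hs : p (s + 1) < p s)
    (ht : p (t + 1) < p t) (hst : p s = p t) : s = t := by
  by_contra hne
  rcases lt_or_gt_of_ne hne with h | h
  · have := hp (show s + 1 ≤ t by omega)
    omega
  · have := hp (show t + 1 ≤ s by omega)
    omega

theorem Antitone.apply_eq_of_chain {n : ℕ} (hp : Antitone p) (h0 : p 0 ≤ n) {d : Fin n → ℕ}
    (hd : StrictMono d) (hne : ∀ j : Fin n, p (d j) ≠ n - 1 - j)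
    (hdrop : ∀ j : Fin n, p (d j) = n - j → p (d j + 1) = n - 1 - j) (j : Fin n) :
    p (d j) = n - j := by
  -- `n - k ≤ p (d k)` propagates backwards from `p (d (n - 1)) ≠ 0`, and then
  -- `p (d k) ≤ n - k` forwards from `p 0 ≤ n`.
  have sub_le_apply : ∀ k (hk : k < n), n - k ≤ p (d ⟨k, hk⟩) := by
    intro k hk
    refine Nat.decreasingInduction (motive := fun k _ => ∀ hk : k < n, n - k ≤ p (d ⟨k, hk⟩))
      (fun k _ ih hk => ?_) (fun hn => absurd hn (lt_irrefl n)) hk.le hk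
    have hnext : n - 1 - k ≤ p (d ⟨k, hk⟩) := by
      by_cases hk1 : k + 1 < n
      · have := ih hk1
        have := hp (hd.monotone (Fin.mk_le_mk.2 k.le_succ) : d ⟨k, hk⟩ ≤ d ⟨k + 1, hk1⟩)
        omega
      · omega
    have := hne ⟨k, hk⟩
    dsimp only at this
    omega
  have apply_le_sub : ∀ k (hk : k < n), p (d ⟨k, hk⟩) ≤ n - k := by
    intro k hk
    induction k with
    | zero => exact (hp (Nat.zero_le _)).trans h0
    | succ k ih =>
      have hk' : k < n := by omega
      have hdrop' := hdrop ⟨k, hk'⟩ (le_antisymm (ih hk') (sub_le_apply k hk'))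
      have hlt : d ⟨k, hk'⟩ < d ⟨k + 1, hk⟩ := hd (Fin.mk_lt_mk.2 (lt_add_one k))
      have := hp (Nat.add_one_le_iff.2 hlt)
      dsimp only at hdrop'
      omega
  exact le_antisymm (apply_le_sub j j.isLt) (sub_le_apply j j.isLt)

end Sequences

section Inversions

variable {n c : ℕ}

theorem simpleT_of_lt (hc : c < n) :
    simpleT n c = swap (⟨c, by omega⟩ : Fin (n + 1)) ⟨c + 1, by omega⟩ :=
  dif_pos hc

theorem simpleT_of_le (hc : n ≤ c) : simpleT n c = 1 :=
  dif_neg (by omega)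

@[simp]
theorem simpleT_mul_self (n c : ℕ) : simpleT n c * simpleT n c = 1 := by
  unfold simpleT
  split <;> simp

@[simp]
theorem simpleT_inv (n c : ℕ) : (simpleT n c)⁻¹ = simpleT n c :=
  inv_eq_of_mul_eq_one_left (simpleT_mul_self n c)

@[simp]
theorem simpleT_apply_simpleT (n c : ℕ) (a : Fin (n + 1)) : simpleT n c (simpleT n c a) = a := by
  rw [← Perm.mul_apply, simpleT_mul_self, Perm.one_apply]

def inversions (w : Perm (Fin (n + 1))) : Finset (Fin (n + 1) × Fin (n + 1)) :=
  {p | p.1 < p.2 ∧ w p.2 < w p.1}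

@[simp]
theorem mem_inversions {w : Perm (Fin (n + 1))} {p : Fin (n + 1) × Fin (n + 1)} :
    p ∈ inversions w ↔ p.1 < p.2 ∧ w p.2 < w p.1 := by
  simp [inversions]

@[simp]
theorem inversions_one : inversions (1 : Perm (Fin (n + 1))) = ∅ := by
  ext p
  simpa using le_of_lt

theorem simpleT_lt_simpleT_and_iff {w : Perm (Fin (n + 1))} (hc : c < n)
    (hw : w ⟨c + 1, by omega⟩ < w ⟨c, by omega⟩) (a b : Fin (n + 1)) :
    simpleT n c a < simpleT n c b ∧ w b < w a ↔
      (a < b ∧ w b < w a) ∧ (a, b) ≠ (⟨c, by omega⟩, ⟨c + 1, by omega⟩) := by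
  rw [simpleT_of_lt hc, swap_apply_def, swap_apply_def]
  split_ifs <;> subst_vars <;> simp_all [Fin.ext_iff, ← Fin.val_fin_lt] <;> omega

theorem card_inversions_mul_simpleT_add_one {w : Perm (Fin (n + 1))} (hc : c < n)
    (hw : w ⟨c + 1, by omega⟩ < w ⟨c, by omega⟩) :
    (inversions (w * simpleT n c)).card + 1 = (inversions w).card := by
  have hswap : (inversions (w * simpleT n c)).card =
      ((inversions w).erase (⟨c, by omega⟩, ⟨c + 1, by omega⟩)).card := by
    refine Finset.card_nbij' (Prod.map (simpleT n c) (simpleT n c))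
      (Prod.map (simpleT n c) (simpleT n c)) ?_ ?_ ?_ ?_ <;> rintro ⟨a, b⟩ hab
    · have := (simpleT_lt_simpleT_and_iff hc hw (simpleT n c a) (simpleT n c b)).1
        (by simpa using hab)
      simpa using this
    · have := (simpleT_lt_simpleT_and_iff hc hw a b).2 (by simpa using hab)
      simpa using this
    all_goals simp
  rw [hswap, Finset.card_erase_add_one]
  simpa [← Fin.val_fin_lt] using hw

theorem card_inversions_mul_simpleT_of_lt {w : Perm (Fin (n + 1))} (hc : c < n)
    (hw : w ⟨c, by omega⟩ < w ⟨c + 1, by omega⟩) :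
    (inversions (w * simpleT n c)).card = (inversions w).card + 1 := by
  have h := card_inversions_mul_simpleT_add_one (w := w * simpleT n c) hc
    (by simpa [simpleT_of_lt hc] using hw)
  rwa [mul_assoc, simpleT_mul_self, mul_one, eq_comm] at h

theorem card_inversions_mul_simpleT_le (w : Perm (Fin (n + 1))) (c : ℕ) :
    (inversions (w * simpleT n c)).card ≤ (inversions w).card + 1 := by
  rcases lt_or_ge c n with hc | hc
  · rcases lt_or_gt_of_ne (w.injective.ne (a₁ := ⟨c, by omega⟩) (a₂ := ⟨c + 1, by omega⟩)
      (by simp [Fin.ext_iff])) with hw | hw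
    · exact (card_inversions_mul_simpleT_of_lt hc hw).le
    · have := card_inversions_mul_simpleT_add_one hc hw
      omega
  · simp [simpleT_of_le hc]

end Inversions

section Words

variable {n : ℕ}

theorem exists_descent_of_ne_one {w : Perm (Fin (n + 1))} (hw : w ≠ 1) :
    ∃ c, ∃ hc : c < n, w ⟨c + 1, by omega⟩ < w ⟨c, by omega⟩ := by
  by_contra! hasc
  refine hw (Equiv.ext fun a => (StrictMono.apply_eq (Fin.strictMono_iff_lt_succ.2 fun i => ?_)))
  exact lt_of_le_of_ne (hasc i i.isLt) (w.injective.ne Fin.castSucc_lt_succ.ne)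

theorem exists_isWord_length_eq_card_inversions (w : Perm (Fin (n + 1))) :
    ∃ l, IsWord n w l ∧ l.length = (inversions w).card := by
  induction h : (inversions w).card using Nat.strong_induction_on generalizing w with
  | _ k ih =>
  by_cases hw : w = 1
  · subst hw
    exact ⟨[], ⟨by simp, rfl⟩, by simp [← h]⟩
  obtain ⟨c, hc, hdesc⟩ := exists_descent_of_ne_one hw
  have hcard := card_inversions_mul_simpleT_add_one hc hdesc
  obtain ⟨l, hl, hlen⟩ := ih _ (by omega) (w * simpleT n c) rfl
  refine ⟨l ++ [c], ⟨?_, ?_⟩, by simp; omega⟩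
  · simpa [or_imp, forall_and] using ⟨hl.1, hc⟩
  · simp [hl.2, mul_assoc]

theorem coxLen_le_card_inversions (w : Perm (Fin (n + 1))) :
    coxLen n w ≤ (inversions w).card :=
  have ⟨l, hl, hlen⟩ := exists_isWord_length_eq_card_inversions w
  Nat.sInf_le ⟨l, hlen, hl⟩

def prefixProd (n : ℕ) (l : List ℕ) (t : ℕ) : Perm (Fin (n + 1)) :=
  ((l.take t).map (simpleT n)).prod

variable {l : List ℕ} {t : ℕ}

@[simp]
theorem prefixProd_zero : prefixProd n l 0 = 1 := by
  simp [prefixProd]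

theorem prefixProd_succ (ht : t < l.length) :
    prefixProd n l (t + 1) = prefixProd n l t * simpleT n l[t] := by
  simp only [prefixProd, List.map_take]
  rw [List.prod_take_succ _ _ (by simpa), List.getElem_map]

theorem prefixProd_of_length_le (ht : l.length ≤ t) :
    prefixProd n l t = (l.map (simpleT n)).prod := by
  simp [prefixProd, List.take_of_length_le ht]

theorem IsReducedWord.card_inversions_prefixProd {w : Perm (Fin (n + 1))}
    (h : IsReducedWord n w l) (ht : t ≤ l.length) :
    (inversions (prefixProd n l t)).card = t := by
  -- The count rises by at most one per letter, starts at `0` and ends at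
  -- `#(inversions w) ≥ coxLen n w = l.length`.
  set f := fun s => (inversions (prefixProd n l s)).card
  have hf : ∀ s, f (s + 1) ≤ f s + 1 := fun s => by
    rcases lt_or_ge s l.length with hs | hs
    · simpa only [f, prefixProd_succ hs] using card_inversions_mul_simpleT_le _ _
    · simp [f, prefixProd_of_length_le hs, prefixProd_of_length_le (hs.trans s.le_succ)]
  have hlen : l.length ≤ f l.length := by
    simpa [f, prefixProd_of_length_le le_rfl, h.1.2, ← h.2] using coxLen_le_card_inversions w
  obtain ⟨k, hk⟩ := Nat.exists_eq_add_of_le ht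
  have h0 : f t ≤ t := by simpa [f] using apply_add_le_apply_add hf 0 t
  have ht' : f l.length ≤ f t + k := hk ▸ apply_add_le_apply_add hf t k
  change f t = t
  omega

end Words

section TopWire

variable {n : ℕ} {l : List ℕ} {t : ℕ}

def topWire (n : ℕ) (l : List ℕ) (t : ℕ) : ℕ :=
  (prefixProd n l t)⁻¹ (Fin.last n)

@[simp]
theorem topWire_zero : topWire n l 0 = n := by
  simp [topWire]

theorem topWire_succ_of_length_le (ht : l.length ≤ t) : topWire n l (t + 1) = topWire n l t := by
  rw [topWire, topWire, prefixProd_of_length_le ht, prefixProd_of_length_le (ht.trans t.le_succ)]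

theorem topWire_length_of_isWord_w0 (hw : IsWord n (w0 n) l) : topWire n l l.length = 0 := by
  simp [topWire, prefixProd_of_length_le le_rfl, hw.2, w0]

variable {w : Perm (Fin (n + 1))}

theorem IsReducedWord.topWire_ne_getElem (h : IsReducedWord n w l) (ht : t < l.length) :
    topWire n l t ≠ l[t] := by
  intro heq
  have hc : l[t] < n := h.1.1 _ (getElem_mem ht)
  have hlast : prefixProd n l t ⟨l[t], by omega⟩ = Fin.last n := by
    rw [← Perm.eq_inv_iff_eq]
    exact Fin.ext heq.symm
  have hdesc : prefixProd n l t ⟨l[t] + 1, by omega⟩ < prefixProd n l t ⟨l[t], by omega⟩ := by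
    refine hlast ▸ (Fin.le_last _).lt_of_ne ?_
    rw [← hlast]
    exact (prefixProd n l t).injective.ne (by simp [Fin.ext_iff])
  have := card_inversions_mul_simpleT_add_one hc hdesc
  rw [← prefixProd_succ ht, h.card_inversions_prefixProd ht,
    h.card_inversions_prefixProd ht.le] at this
  omega

theorem IsReducedWord.topWire_succ (h : IsReducedWord n w l) (ht : t < l.length) :
    topWire n l (t + 1) = if topWire n l t = l[t] + 1 then l[t] else topWire n l t := by
  have hc : l[t] < n := h.1.1 _ (getElem_mem ht)
  have hne := h.topWire_ne_getElem ht
  simp only [topWire, prefixProd_succ ht, mul_inv_rev, simpleT_inv, Perm.mul_apply] at hne ⊢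
  rw [simpleT_of_lt hc, swap_apply_def]
  split_ifs <;> simp_all [Fin.ext_iff]

theorem IsReducedWord.topWire_succ_le (h : IsReducedWord n w l) (t : ℕ) :
    topWire n l (t + 1) ≤ topWire n l t := by
  rcases lt_or_ge t l.length with ht | ht
  · rw [h.topWire_succ ht]
    split_ifs <;> omega
  · rw [topWire_succ_of_length_le ht]

theorem IsReducedWord.antitone_topWire (h : IsReducedWord n w l) : Antitone (topWire n l) :=
  antitone_nat_of_succ_le h.topWire_succ_le

theorem IsReducedWord.topWire_le_succ_add_one (h : IsReducedWord n w l) (t : ℕ) :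
    topWire n l t ≤ topWire n l (t + 1) + 1 := by
  rcases lt_or_ge t l.length with ht | ht
  · rw [h.topWire_succ ht]
    split_ifs <;> omega
  · rw [topWire_succ_of_length_le ht]
    omega

theorem IsReducedWord.topWire_succ_of_eq_add_one (h : IsReducedWord n w l) (ht : t < l.length)
    (hsucc : topWire n l t = l[t] + 1) : topWire n l (t + 1) = l[t] := by
  simp [h.topWire_succ ht, hsucc]

theorem IsReducedWord.getElem_eq_of_topWire_succ_lt (h : IsReducedWord n w l)
    (ht : t < l.length) (hlt : topWire n l (t + 1) < topWire n l t) :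
    l[t] = topWire n l (t + 1) := by
  have := h.topWire_succ ht
  split_ifs at this <;> omega

theorem IsReducedWord.topWire_step_of_chain (h : IsReducedWord n w l)
    {d : Fin n → Fin l.length} (hd : StrictMono d)
    (hletter : ∀ j : Fin n, l[(d j : ℕ)] = n - 1 - j) (j : Fin n) :
    topWire n l (d j) = n - j ∧ topWire n l (d j + 1) = n - 1 - j := by
  have hdrop (j : Fin n) (hj : topWire n l (d j) = n - j) :
      topWire n l (d j + 1) = n - 1 - j := by
    rw [h.topWire_succ_of_eq_add_one (d j).isLt (by rw [hletter j]; omega), hletter j]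
  have hchain := h.antitone_topWire.apply_eq_of_chain topWire_zero.le (d := fun j => d j) hd
    (fun j => hletter j ▸ h.topWire_ne_getElem (d j).isLt) hdrop
  exact ⟨hchain j, hdrop j (hchain j)⟩

theorem IsReducedWord.exists_topWire_step (h : IsReducedWord n (w0 n) l) (j : Fin n) :
    ∃ t < l.length, topWire n l t = n - j ∧ topWire n l (t + 1) = n - 1 - j := by
  obtain ⟨t, ht, h1, h2⟩ := exists_lt_apply_eq_add_one_of_le_add_one h.topWire_le_succ_add_one
    (a := n - 1 - j) (T := l.length) (by rw [topWire_zero]; omega)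
    (by rw [topWire_length_of_isWord_w0 h.1]; omega)
  exact ⟨t, ht, by omega, h2⟩

end TopWire

/-- In any reduced word of the longest element of $S_{n+1}$ there is a unique
increasing sequence of positions carrying the letters `(n, n-1, ..., 1)`
(0-based: `(n-1, ..., 0)`). -/
theorem exists_unique_descending_chain (n : ℕ) (l : List ℕ)
    (h : IsReducedWord n (w0 n) l) :
    ∃! d : Fin n → Fin l.length,
      StrictMono d ∧ ∀ j : Fin n, l.get (d j) = n - 1 - (j : ℕ) := by
  have hp := h.antitone_topWire
  choose d hdL hd using h.exists_topWire_step
  refine ⟨fun j => ⟨d j, hdL j⟩, ⟨fun i j hij => hp.reflect_lt ?_, fun j => ?_⟩, ?_⟩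
  · dsimp only
    rw [(hd i).1, (hd j).1]
    omega
  · obtain ⟨h1, h2⟩ := hd j
    rw [List.get_eq_getElem, h.getElem_eq_of_topWire_succ_lt (hdL j) (by omega), h2]
  · rintro d' ⟨hd'mono, hd'letter⟩
    funext j
    obtain ⟨h1, h2⟩ := hd j
    obtain ⟨h1', h2'⟩ := h.topWire_step_of_chain hd'mono (by simpa using hd'letter) j
    exact Fin.ext (hp.eq_of_apply_succ_lt (t := d j) (by omega) (by omega) (by omega))
end

section
/- Let (i_1,...,i_N) be a reduced word of the longest element w_0 of S_{n+1}, let d_1 < ⋯ < d_n be the unique increasing indices with (i_{d_1},...,i_{d_n}) = (n,n-1,...,1), and let a_1 < ⋯ < a_n be the unique increasing indices with (i_{a_1},...,i_{a_n}) = (1,2,...,n). Then the sets {a_1,...,a_n} and {d_1,...,d_n} intersect in exactly one element. -/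
/-!
Read the word as a wiring diagram: after `t` letters wire `x` sits at position `π_t x`, and the
letter `c = l_t` swaps the wires at positions `c` and `c + 1`. For a word of `w₀` every pair of
wires ends in reversed order, so it crosses an odd number of times; a reduced word has only
`n (n + 1) / 2` letters, each crossing one pair, so every pair crosses exactly once, and from its
initial order. Hence the top wire `n` only moves down and the bottom wire `0` only moves up.
Inducting over the levels from both ends shows that the letters of a descending chain are exactly
the steps where wire `n` descends, and those of an ascending chain the steps where wire `0`
ascends. A common letter is therefore a crossing of wires `0` and `n`, and their unique crossing
lies on both chains.
-/

open Equiv List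

namespace WiringDiagram

section LevelSequences

variable {N : ℕ} {f g : ℕ → ℕ}

theorem eq_of_descends (hf : Antitone f) (hdrop : ∀ t < N, f t = g t + 1 → f (t + 1) = g t)
    {s t : ℕ} (hs : s < N) (ht : t < N) (hfs : f s = g s + 1) (hft : f t = g t + 1)
    (hst : g s = g t) : s = t := by
  rcases lt_trichotomy s t with hlt | rfl | hlt
  · have := hf (Nat.succ_le_of_lt hlt)
    rw [hdrop s hs hfs] at this
    omega
  · rfl
  · have := hf (Nat.succ_le_of_lt hlt)
    rw [hdrop t ht hft] at this
    omega

theorem eq_of_ascends (hf : Monotone f) (hrise : ∀ t < N, f t = g t → f (t + 1) = g t + 1)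
    {s t : ℕ} (hs : s < N) (ht : t < N) (hfs : f s = g s) (hft : f t = g t)
    (hst : g s = g t) : s = t := by
  rcases lt_trichotomy s t with hlt | rfl | hlt
  · have := hf (Nat.succ_le_of_lt hlt)
    rw [hrise s hs hfs] at this
    omega
  · rfl
  · have := hf (Nat.succ_le_of_lt hlt)
    rw [hrise t ht hft] at this
    omega

theorem descends_of_descending_chain {m : ℕ} (hf : Antitone f) (hfm : ∀ t, f t ≤ m + 1)
    (hne : ∀ t < N, f t ≠ g t) (hdrop : ∀ t < N, f t = g t + 1 → f (t + 1) = g t)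
    {d : Fin (m + 1) → Fin N} (hd : StrictMono d) (hdg : ∀ j, g (d j) = m - j)
    (j : Fin (m + 1)) : f (d j) = g (d j) + 1 := by
  have hle : ∀ j : Fin (m + 1), f (d j) ≤ m + 1 - j := by
    refine Fin.induction (hfm _) fun i ih => ?_
    have hnext : f (d i.castSucc + 1) ≤ m - i := by
      have hne' := hne _ (d i.castSucc).isLt
      have hg := hdg i.castSucc
      simp only [Fin.val_castSucc] at ih hg
      by_cases hfi : f (d i.castSucc) = g (d i.castSucc) + 1
      · rw [hdrop _ (d i.castSucc).isLt hfi]; omega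
      · have := hf (Nat.le_add_right (d i.castSucc : ℕ) 1); omega
    have := hf (show (d i.castSucc : ℕ) + 1 ≤ d i.succ from hd Fin.castSucc_lt_succ)
    simp only [Fin.val_succ, Fin.val_castSucc] at *
    omega
  have hge : ∀ j : Fin (m + 1), m + 1 - j ≤ f (d j) := by
    refine Fin.reverseInduction ?_ fun i ih => ?_
    · have := hne _ (d (Fin.last m)).isLt
      have := hdg (Fin.last m)
      simp only [Fin.val_last] at *
      omega
    · have := hf (hd (Fin.castSucc_lt_succ (i := i))).le
      have := hne _ (d i.castSucc).isLt
      have := hdg i.castSucc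
      simp only [Fin.val_succ, Fin.val_castSucc] at *
      omega
  have := hle j
  have := hge j
  have := hdg j
  omega

/-- Reflected through `x ↦ m + 1 - x`, an ascending wire becomes a descending one. -/
theorem ascends_of_ascending_chain {m : ℕ} (hf : Monotone f) (hfm : ∀ t, f t ≤ m + 1)
    (hgm : ∀ t < N, g t ≤ m)
    (hne : ∀ t < N, f t ≠ g t + 1) (hrise : ∀ t < N, f t = g t → f (t + 1) = g t + 1)
    {a : Fin (m + 1) → Fin N} (ha : StrictMono a) (hag : ∀ j, g (a j) = j)
    (j : Fin (m + 1)) : f (a j) = g (a j) := by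
  have key := descends_of_descending_chain (f := fun t => m + 1 - f t) (g := fun t => m - g t)
    (fun s t hst => Nat.sub_le_sub_left (hf hst) _) (fun t => Nat.sub_le _ _)
    (fun t ht => by have := hfm t; have := hgm t ht; have := hne t ht; omega)
    (fun t ht h => by
      have := hfm t; have := hgm t ht
      have := hrise t ht (by omega); have := hfm (t + 1)
      omega)
    ha (fun j => by rw [hag]) j
  have := hfm (a j)
  have := hgm _ (a j).isLt
  omega

end LevelSequences

section Transpositions

theorem simpleT_apply_val {n c : ℕ} (hc : c < n) (x : Fin (n + 1)) :
    (simpleT n c x : ℕ) = if (x : ℕ) = c then c + 1 else if (x : ℕ) = c + 1 then c else x := by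
  simp only [simpleT, dif_pos (Nat.succ_le_of_lt hc), Equiv.swap_apply_def, Fin.ext_iff]
  split_ifs <;> simp_all

theorem simpleT_inv (n c : ℕ) : (simpleT n c)⁻¹ = simpleT n c := by
  unfold simpleT
  split_ifs
  · exact Equiv.swap_inv _ _
  · exact inv_one

theorem w0_inv (n : ℕ) : (w0 n)⁻¹ = w0 n := rfl

theorem w0_apply_val {n : ℕ} (x : Fin (n + 1)) : (w0 n x : ℕ) = n - x := by
  simp [w0, Fin.val_rev]

theorem prod_map_simpleT_reverse_range_apply_val {n k : ℕ} (hk : k < n) (x : Fin (n + 1)) :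
    ((((List.range (k + 1)).reverse.map (simpleT n)).prod x : Fin (n + 1)) : ℕ) =
      if (x : ℕ) = 0 then k + 1 else if (x : ℕ) ≤ k + 1 then x - 1 else x := by
  induction k generalizing x with
  | zero =>
    simp only [zero_add, List.range_one, List.reverse_singleton, List.map_cons, List.map_nil,
      List.prod_singleton, simpleT_apply_val hk]
    split_ifs <;> omega
  | succ k ih =>
    rw [List.range_succ, List.reverse_append, List.map_append, List.prod_append]
    simp only [List.reverse_singleton, List.map_cons, List.map_nil, List.prod_singleton,
      Equiv.Perm.coe_mul, Function.comp_apply, simpleT_apply_val hk, ih (by omega)]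
    have := x.isLt
    split_ifs <;> omega

theorem prod_map_simpleT_flatMap_apply_val {n m : ℕ} (hm : m ≤ n) (x : Fin (n + 1)) :
    (((((List.range m).flatMap fun k => (List.range (k + 1)).reverse).map (simpleT n)).prod x :
      Fin (n + 1)) : ℕ) = if (x : ℕ) ≤ m then m - x else x := by
  induction m generalizing x with
  | zero => simp
  | succ m ih =>
    rw [List.range_succ, List.flatMap_append, List.map_append, List.prod_append]
    simp only [List.flatMap_singleton, Equiv.Perm.coe_mul, Function.comp_apply]
    rw [ih (by omega), prod_map_simpleT_reverse_range_apply_val (by omega)]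
    have := x.isLt
    split_ifs <;> omega

/-- The witness is the word `[0] ++ [1, 0] ++ ⋯ ++ [n - 1, …, 0]` of `w₀`. -/
theorem coxLen_w0_mul_two_le (n : ℕ) : coxLen n (w0 n) * 2 ≤ n * (n + 1) := by
  set word := (List.range n).flatMap fun k => (List.range (k + 1)).reverse with hword_def
  have hlen : word.length * 2 = n * (n + 1) := by
    simp only [hword_def, List.length_flatMap, List.length_reverse, List.length_range]
    clear word hword_def
    induction n with
    | zero => rfl
    | succ n ih =>
      rw [List.range_succ, List.map_append, List.sum_append, add_mul, ih]
      simp only [List.map_cons, List.map_nil, List.sum_cons, List.sum_nil]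
      ring
  have hword : IsWord n (w0 n) word := by
    refine ⟨fun c hc => ?_, Equiv.ext fun x => Fin.ext ?_⟩
    · simp only [word, List.mem_flatMap, List.mem_reverse, List.mem_range] at hc
      obtain ⟨k, hk, hck⟩ := hc
      omega
    · rw [prod_map_simpleT_flatMap_apply_val le_rfl, w0_apply_val, if_pos (by omega)]
  calc coxLen n (w0 n) * 2 ≤ word.length * 2 := by
        gcongr; exact Nat.sInf_le ⟨word, rfl, hword⟩
    _ = n * (n + 1) := hlen

end Transpositions

/-- `wiring n l t = s_{l_{t-1}} ⋯ s_{l_0}`: wire `x` of the wiring diagram of `l` is at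
position `wiring n l t x` after the first `t` letters have swapped adjacent positions. -/
def wiring (n : ℕ) (l : List ℕ) (t : ℕ) : Perm (Fin (n + 1)) :=
  ((l.take t).map (simpleT n)).reverse.prod

def Crosses (n : ℕ) (l : List ℕ) (i j : Fin (n + 1)) (t : ℕ) : Prop :=
  ((wiring n l t i : ℕ) = l.getD t 0 ∧ (wiring n l t j : ℕ) = l.getD t 0 + 1) ∨
  ((wiring n l t j : ℕ) = l.getD t 0 ∧ (wiring n l t i : ℕ) = l.getD t 0 + 1)

instance (n : ℕ) (l : List ℕ) (i j : Fin (n + 1)) : DecidablePred (Crosses n l i j) :=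
  fun _ => instDecidableOr

section Wiring

variable {n : ℕ} {l : List ℕ}

theorem getD_lt (hl : ∀ c ∈ l, c < n) {t : ℕ} (ht : t < l.length) : l.getD t 0 < n :=
  hl _ (List.getD_eq_getElem _ _ ht ▸ List.getElem_mem ht)

theorem wiring_zero : wiring n l 0 = 1 := by
  simp [wiring]

theorem wiring_succ {t : ℕ} (ht : t < l.length) :
    wiring n l (t + 1) = simpleT n (l.getD t 0) * wiring n l t := by
  rw [wiring, wiring, List.take_add_one, List.getElem?_eq_getElem ht, List.getD_eq_getElem _ _ ht,
    List.map_append, List.reverse_append, List.prod_append]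
  simp only [Option.toList_some, List.map_cons, List.map_nil, List.reverse_singleton,
    List.prod_singleton]

theorem wiring_succ_of_length_le {t : ℕ} (ht : l.length ≤ t) :
    wiring n l (t + 1) = wiring n l t := by
  simp only [wiring, List.take_of_length_le ht, List.take_of_length_le (Nat.le_succ_of_le ht)]

theorem wiring_length {w : Perm (Fin (n + 1))} (hw : IsWord n w l) :
    wiring n l l.length = w⁻¹ := by
  rw [wiring, List.take_length, ← hw.2, List.prod_inv_reverse, List.map_map]
  simp only [Function.comp_def, simpleT_inv]

theorem wiring_succ_apply_val (hl : ∀ c ∈ l, c < n) {t : ℕ} (ht : t < l.length)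
    (x : Fin (n + 1)) : (wiring n l (t + 1) x : ℕ) =
      if (wiring n l t x : ℕ) = l.getD t 0 then l.getD t 0 + 1
      else if (wiring n l t x : ℕ) = l.getD t 0 + 1 then l.getD t 0 else wiring n l t x := by
  rw [wiring_succ ht, Equiv.Perm.mul_apply,
    simpleT_apply_val (getD_lt hl ht)]

theorem wiring_succ_apply_of_eq (hl : ∀ c ∈ l, c < n) {t : ℕ} (ht : t < l.length)
    {x : Fin (n + 1)} (hx : (wiring n l t x : ℕ) = l.getD t 0) :
    (wiring n l (t + 1) x : ℕ) = l.getD t 0 + 1 := by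
  rw [wiring_succ_apply_val hl ht, if_pos hx]

theorem wiring_succ_apply_of_eq_succ (hl : ∀ c ∈ l, c < n) {t : ℕ} (ht : t < l.length)
    {x : Fin (n + 1)} (hx : (wiring n l t x : ℕ) = l.getD t 0 + 1) :
    (wiring n l (t + 1) x : ℕ) = l.getD t 0 := by
  rw [wiring_succ_apply_val hl ht, if_neg (by omega), if_pos hx]

theorem crosses_comm {i j : Fin (n + 1)} {t : ℕ} : Crosses n l i j t ↔ Crosses n l j i t :=
  Or.comm

theorem count_crosses_comm {i j : Fin (n + 1)} {t : ℕ} :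
    Nat.count (Crosses n l i j) t = Nat.count (Crosses n l j i) t := by
  simp only [Nat.count_eq_card_filter_range]
  congr 1
  exact Finset.filter_congr fun _ _ => crosses_comm

theorem wiring_succ_lt_iff (hl : ∀ c ∈ l, c < n) {t : ℕ} (ht : t < l.length)
    {i j : Fin (n + 1)} (hij : i ≠ j) :
    (wiring n l (t + 1) i : ℕ) < wiring n l (t + 1) j ↔
      ((wiring n l t i : ℕ) < wiring n l t j ↔ ¬ Crosses n l i j t) := by
  have hne : (wiring n l t i : ℕ) ≠ wiring n l t j :=
    fun h => hij ((wiring n l t).injective (Fin.ext h))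
  rw [wiring_succ_apply_val hl ht, wiring_succ_apply_val hl ht, Crosses]
  split_ifs <;> omega

theorem wiring_lt_iff_even_count (hl : ∀ c ∈ l, c < n) {i j : Fin (n + 1)} (hij : i < j)
    {t : ℕ} (ht : t ≤ l.length) :
    (wiring n l t i : ℕ) < wiring n l t j ↔ Even (Nat.count (Crosses n l i j) t) := by
  induction t with
  | zero => simpa [wiring_zero] using hij
  | succ t ih =>
    rw [wiring_succ_lt_iff hl ht hij.ne, ih (by omega), Nat.count_succ]
    by_cases hc : Crosses n l i j t <;> simp [hc, Nat.even_add_one]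

theorem odd_count_crosses (hw : IsWord n (w0 n) l) {i j : Fin (n + 1)} (hij : i ≠ j) :
    Odd (Nat.count (Crosses n l i j) l.length) := by
  wlog hlt : i < j generalizing i j
  · rw [count_crosses_comm]
    exact this hij.symm (lt_of_le_of_ne (not_lt.mp hlt) hij.symm)
  rw [← Nat.not_even_iff_odd, ← wiring_lt_iff_even_count hw.1 hlt le_rfl, wiring_length hw,
    w0_inv, w0_apply_val, w0_apply_val]
  have := j.isLt
  have : (i : ℕ) < j := hlt
  omega

theorem card_filter_crosses (hl : ∀ c ∈ l, c < n) {t : ℕ} (ht : t < l.length) :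
    ((Finset.univ : Finset (Fin (n + 1))).offDiag.filter
      fun p => Crosses n l p.1 p.2 t).card = 2 := by
  have hc := getD_lt hl ht
  set x := (wiring n l t).symm ⟨l.getD t 0, by omega⟩
  set y := (wiring n l t).symm ⟨l.getD t 0 + 1, by omega⟩
  have hxy : x ≠ y := by simp [x, y]
  rw [Finset.card_eq_two]
  refine ⟨(x, y), (y, x), by simp [hxy], ?_⟩
  ext ⟨i, j⟩
  rw [Finset.mem_filter]
  simp only [Finset.mem_offDiag, Finset.mem_univ, true_and,
    Finset.mem_insert, Finset.mem_singleton, Prod.mk.injEq, Crosses, x, y,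
    Equiv.eq_symm_apply, Fin.ext_iff]
  constructor
  · rintro ⟨-, h⟩
    omega
  · intro h
    refine ⟨fun hij => ?_, by omega⟩
    subst hij
    omega

end Wiring

section LongestElement

variable {n : ℕ} {l : List ℕ}

theorem sum_count_crosses (hl : ∀ c ∈ l, c < n) :
    ∑ p ∈ (Finset.univ : Finset (Fin (n + 1))).offDiag,
      Nat.count (Crosses n l p.1 p.2) l.length = 2 * l.length := by
  simp only [Nat.count_eq_card_filter_range, Finset.card_filter]
  rw [Finset.sum_comm, Finset.sum_congr rfl fun t ht => ?_, Finset.sum_const, Finset.card_range,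
    smul_eq_mul, mul_comm]
  rw [← Finset.card_filter]
  exact card_filter_crosses hl (Finset.mem_range.1 ht)

/-- Every pair of wires crosses an odd number of times, while a reduced word has only
`n (n + 1) / 2` letters, each crossing one pair. -/
theorem count_crosses_eq_one (h : IsReducedWord n (w0 n) l) {i j : Fin (n + 1)} (hij : i ≠ j) :
    Nat.count (Crosses n l i j) l.length = 1 := by
  set P := (Finset.univ : Finset (Fin (n + 1))).offDiag
  have hpos : ∀ p ∈ P, 1 ≤ Nat.count (Crosses n l p.1 p.2) l.length :=
    fun p hp => (odd_count_crosses h.1 (Finset.mem_offDiag.1 hp).2.2).pos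
  have hcard : P.card = n * (n + 1) := by
    simp only [P, Finset.offDiag_card, Finset.card_univ, Fintype.card_fin]
    rw [Nat.sub_eq_of_eq_add]
    ring
  have hsum : ∑ p ∈ P, 1 = ∑ p ∈ P, Nat.count (Crosses n l p.1 p.2) l.length := by
    refine le_antisymm (Finset.sum_le_sum hpos) ?_
    rw [sum_count_crosses h.1.1, Finset.sum_const, smul_eq_mul, mul_one, hcard, mul_comm, h.2]
    exact coxLen_w0_mul_two_le n
  exact ((Finset.sum_eq_sum_iff_of_le hpos).1 hsum (i, j) (by simp [P, hij])).symm

theorem exists_crosses_iff (h : IsReducedWord n (w0 n) l) {i j : Fin (n + 1)} (hij : i ≠ j) :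
    ∃ τ < l.length, ∀ t < l.length, Crosses n l i j t ↔ t = τ := by
  obtain ⟨τ, hτ⟩ := Finset.card_eq_one.1
    ((Nat.count_eq_card_filter_range _ _).symm.trans (count_crosses_eq_one h hij))
  have hmem : ∀ t, t < l.length ∧ Crosses n l i j t ↔ t = τ := fun t => by
    rw [← Finset.mem_singleton, ← hτ, Finset.mem_filter, Finset.mem_range]
  exact ⟨τ, ((hmem τ).2 rfl).1, fun t ht => ⟨fun hc => (hmem t).1 ⟨ht, hc⟩,
    fun hτt => ((hmem t).2 hτt).2⟩⟩

/-- Since two wires cross only once, they cross from their initial order. -/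
theorem Crosses.wiring_eq (h : IsReducedWord n (w0 n) l) {i j : Fin (n + 1)} (hij : i < j)
    {t : ℕ} (ht : t < l.length) (hc : Crosses n l i j t) :
    (wiring n l t i : ℕ) = l.getD t 0 ∧ (wiring n l t j : ℕ) = l.getD t 0 + 1 := by
  have hcount : Nat.count (Crosses n l i j) t = 0 := by
    have := Nat.count_monotone (Crosses n l i j) (Nat.succ_le_of_lt ht)
    rw [Nat.count_succ, if_pos hc, count_crosses_eq_one h hij.ne] at this
    omega
  have hlt := (wiring_lt_iff_even_count h.1.1 hij ht.le).2 (by simp [hcount])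
  rcases hc with hc | hc
  · exact hc
  · omega

theorem wiring_last_ne (h : IsReducedWord n (w0 n) l) {t : ℕ} (ht : t < l.length) :
    (wiring n l t (Fin.last n) : ℕ) ≠ l.getD t 0 := by
  intro hlast
  have hc := getD_lt h.1.1 ht
  set r := (wiring n l t).symm ⟨l.getD t 0 + 1, by omega⟩
  have hr : (wiring n l t r : ℕ) = l.getD t 0 + 1 := by simp [r]
  have hrl : r < Fin.last n := lt_of_le_of_ne (Fin.le_last r) fun hrl => by rw [hrl] at hr; omega
  have := (Crosses.wiring_eq h hrl ht (Or.inr ⟨hlast, hr⟩)).1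
  omega

theorem wiring_zero_ne (h : IsReducedWord n (w0 n) l) {t : ℕ} (ht : t < l.length) :
    (wiring n l t 0 : ℕ) ≠ l.getD t 0 + 1 := by
  intro hzero
  have hc := getD_lt h.1.1 ht
  set r := (wiring n l t).symm ⟨l.getD t 0, by omega⟩
  have hr : (wiring n l t r : ℕ) = l.getD t 0 := by simp [r]
  have hr0 : 0 < r := lt_of_le_of_ne (Fin.zero_le r) fun hr0 => by rw [← hr0] at hr; omega
  have := (Crosses.wiring_eq h hr0 ht (Or.inr ⟨hr, hzero⟩)).1
  omega

theorem antitone_wiring_last (h : IsReducedWord n (w0 n) l) :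
    Antitone fun t => (wiring n l t (Fin.last n) : ℕ) := by
  refine antitone_nat_of_succ_le fun t => ?_
  rcases lt_or_ge t l.length with ht | ht
  · have := wiring_last_ne h ht
    rw [wiring_succ_apply_val h.1.1 ht]
    split_ifs <;> omega
  · rw [wiring_succ_of_length_le ht]

theorem monotone_wiring_zero (h : IsReducedWord n (w0 n) l) :
    Monotone fun t => (wiring n l t 0 : ℕ) := by
  refine monotone_nat_of_le_succ fun t => ?_
  rcases lt_or_ge t l.length with ht | ht
  · have := wiring_zero_ne h ht
    rw [wiring_succ_apply_val h.1.1 ht]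
    split_ifs <;> omega
  · rw [wiring_succ_of_length_le ht]

end LongestElement

end WiringDiagram

open WiringDiagram in
/-- The descending and ascending chains of a reduced word of the longest element
intersect in exactly one position. -/
theorem descending_ascending_intersect_unique (n : ℕ) (hn : 0 < n) (l : List ℕ)
    (h : IsReducedWord n (w0 n) l)
    (d a : Fin n → Fin l.length)
    (hd : StrictMono d) (hdval : ∀ j : Fin n, l.get (d j) = n - 1 - (j : ℕ))
    (ha : StrictMono a) (haval : ∀ j : Fin n, l.get (a j) = (j : ℕ)) :
    ∃! x : Fin l.length, (∃ i, d i = x) ∧ (∃ i, a i = x) := by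
  obtain ⟨m, rfl⟩ := Nat.exists_eq_add_one_of_ne_zero hn.ne'
  set R := fun t => (wiring (m + 1) l t (Fin.last (m + 1)) : ℕ)
  set S := fun t => (wiring (m + 1) l t 0 : ℕ)
  set g := fun t => l.getD t 0
  have hdrop : ∀ t < l.length, R t = g t + 1 → R (t + 1) = g t :=
    fun t ht => wiring_succ_apply_of_eq_succ h.1.1 ht
  have hrise : ∀ t < l.length, S t = g t → S (t + 1) = g t + 1 :=
    fun t ht => wiring_succ_apply_of_eq h.1.1 ht
  have hdg : ∀ j, g (d j) = m - j := fun j => by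
    rw [show g (d j) = l.get (d j) from List.getD_eq_get _ _ _, hdval, Nat.add_sub_cancel]
  have hag : ∀ j, g (a j) = j := fun j => (List.getD_eq_get _ _ _).trans (haval j)
  have hdR : ∀ j, R (d j) = g (d j) + 1 :=
    descends_of_descending_chain (antitone_wiring_last h) (fun t => Fin.is_le _)
      (fun t ht => wiring_last_ne h ht) hdrop hd hdg
  have haS : ∀ j, S (a j) = g (a j) :=
    ascends_of_ascending_chain (monotone_wiring_zero h) (fun t => Fin.is_le _)
      (fun t ht => Nat.lt_succ_iff.1 (getD_lt h.1.1 ht)) (fun t ht => wiring_zero_ne h ht) hrise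
      ha hag
  obtain ⟨τ, hτN, hτ⟩ := exists_crosses_iff h (Fin.last_pos (n := m)).ne
  obtain ⟨hSτ, hRτ⟩ := Crosses.wiring_eq h Fin.last_pos hτN ((hτ τ hτN).2 rfl)
  have hc : g τ < m + 1 := getD_lt h.1.1 hτN
  refine ⟨⟨τ, hτN⟩, ⟨⟨⟨m - g τ, by omega⟩, Fin.ext ?_⟩, ⟨⟨g τ, hc⟩, Fin.ext ?_⟩⟩, ?_⟩
  · refine eq_of_descends (antitone_wiring_last h) hdrop (d _).isLt hτN (hdR _) hRτ ?_
    simp only [hdg]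
    omega
  · exact eq_of_ascends (monotone_wiring_zero h) hrise (a _).isLt hτN (haS _) hSτ (hag _)
  · rintro x ⟨⟨i, rfl⟩, ⟨i', hi'⟩⟩
    exact Fin.ext ((hτ _ (d i).isLt).1 (Or.inl ⟨hi' ▸ haS i', hdR i⟩))
end

section
/- Let P be a finite poset equipped with a function f : P → ℤ such that for each i, the fiber {x ∈ P : f(x) = i} is a chain in P. If I and J are ideals of P with |{x ∈ I : f(x) = i}| = |{x ∈ J : f(x) = i}| for all i, then I = J. -/
/-!
The traces of two lower sets on a chain are nested, so traces of equal finite cardinality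
coincide. Applying this to every fiber of `f`, which together cover the poset, gives `I = J`.
-/

lemma IsChain.inter_subset_or_inter_subset_of_isLowerSet {α : Type*} [PartialOrder α]
    {C I J : Set α} (hC : IsChain (· ≤ ·) C) (hI : IsLowerSet I) (hJ : IsLowerSet J) :
    I ∩ C ⊆ J ∩ C ∨ J ∩ C ⊆ I ∩ C := by
  by_contra! h
  obtain ⟨⟨x, ⟨hxI, hxC⟩, hxJ⟩, ⟨y, ⟨hyJ, hyC⟩, hyI⟩⟩ :=
    And.intro (Set.not_subset.mp h.1) (Set.not_subset.mp h.2)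
  rcases hC.total hxC hyC with hxy | hyx
  · exact hxJ ⟨hJ hxy hyJ, hxC⟩
  · exact hyI ⟨hI hyx hxI, hyC⟩

lemma IsChain.inter_eq_of_isLowerSet_of_ncard_eq {α : Type*} [PartialOrder α]
    {C I J : Set α} (hC : IsChain (· ≤ ·) C) (hCfin : C.Finite)
    (hI : IsLowerSet I) (hJ : IsLowerSet J) (hcard : (I ∩ C).ncard = (J ∩ C).ncard) :
    I ∩ C = J ∩ C := by
  rcases hC.inter_subset_or_inter_subset_of_isLowerSet hI hJ with hIJ | hJI
  · exact Set.eq_of_subset_of_ncard_le hIJ hcard.ge (hCfin.inter_of_right J)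
  · exact (Set.eq_of_subset_of_ncard_le hJI hcard.le (hCfin.inter_of_right I)).symm

/-- Let `P` be a finite poset with a labeling `f : P → ℤ` whose fibers are chains.
Then an ideal of `P` is determined by the cardinalities of its intersections with
the fibers of `f`. -/
theorem ideal_eq_of_fiber_counts {α : Type*} [PartialOrder α] [Finite α]
    (f : α → ℤ) (hf : ∀ i : ℤ, IsChain (· ≤ ·) (f ⁻¹' {i}))
    (I J : Set α) (hI : IsLowerSet I) (hJ : IsLowerSet J)
    (hcard : ∀ i : ℤ, (I ∩ f ⁻¹' {i}).ncard = (J ∩ f ⁻¹' {i}).ncard) :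
    I = J := by
  have hfiber (i : ℤ) : I ∩ f ⁻¹' {i} = J ∩ f ⁻¹' {i} :=
    (hf i).inter_eq_of_isLowerSet_of_ncard_eq (Set.toFinite _) hI hJ (hcard i)
  ext x
  simpa using congrArg (x ∈ ·) (hfiber (f x))
end

section
/- Two reduced words i and j of an element w of S_{n+1} are equivalent under 2-moves (commutations) if and only if their word posets P_i and P_j are isomorphic as labeled posets. -/
open Equiv List

/-!
A 2-move exchanges two neighbouring letters that differ by more than one; with no position between
them they are incomparable in the word poset, so the transposition of their positions is an
isomorphism of labeled posets.

Conversely, let `e` be a labeled isomorphism from `P_{a :: t}` to `P_{l'}`. Every letter of `l'`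
before position `e 0` commutes with `a`: otherwise it lies below `e 0` in `P_{l'}`, so its preimage
lies below `0`, the minimum of `P_{a :: t}`. Hence 2-moves bring `l'` to a word `a :: t'`; the
composite isomorphism `P_{a :: t} ≅ P_{a :: t'}` fixes `0` and so restricts to `P_t ≅ P_{t'}`, and
we conclude by induction on the length.
-/

open Relation

theorem Fin.reflTransGen_succ_iff {n : ℕ} {r : Fin (n + 1) → Fin (n + 1) → Prop}
    (hr : ∀ x y, r x y → x ≤ y) {i j : Fin n} :
    ReflTransGen r i.succ j.succ ↔ ReflTransGen (fun x y => r x.succ y.succ) i j := by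
  refine ⟨fun h => ?_, fun h => ReflTransGen.lift Fin.succ (fun _ _ => id) _ _ h⟩
  suffices ∀ y, ReflTransGen r i.succ y →
      ∃ k : Fin n, y = k.succ ∧ ReflTransGen (fun x y => r x.succ y.succ) i k by
    obtain ⟨k, hk, hik⟩ := this _ h
    rwa [Fin.succ_injective _ hk]
  intro y hy
  induction hy with
  | refl => exact ⟨i, rfl, .refl⟩
  | tail _ hcd ih =>
    obtain ⟨k, rfl, hik⟩ := ih
    obtain ⟨m, rfl⟩ := Fin.exists_succ_eq.mpr (ne_of_gt ((Fin.succ_pos k).trans_le (hr _ _ hcd)))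
    exact ⟨m, rfl, hik.tail hcd⟩

theorem Fin.swap_le_swap_of_val_eq_succ {n : ℕ} {p q j k : Fin n} (hpq : (q : ℕ) = p + 1)
    (hjk : j ≤ k) (h : ¬(j = p ∧ k = q)) : Equiv.swap p q j ≤ Equiv.swap p q k := by
  simp only [Equiv.swap_apply_def]
  split_ifs <;> simp only [Fin.ext_iff, Fin.le_def] at * <;> omega

theorem Fin.le_of_swap_le_swap_of_val_eq_succ {n : ℕ} {p q j k : Fin n} (hpq : (q : ℕ) = p + 1)
    (hjk : Equiv.swap p q j ≤ Equiv.swap p q k) (h : ¬(j = q ∧ k = p)) : j ≤ k := by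
  simp only [Equiv.swap_apply_def] at hjk
  split_ifs at hjk <;> simp only [Fin.ext_iff, Fin.le_def] at * <;> omega

def Fin.tailEquiv {n m : ℕ} (e : Fin (n + 1) ≃ Fin (m + 1)) (he : e 0 = 0) : Fin n ≃ Fin m where
  toFun j := (e j.succ).pred (by
    rw [← he, e.injective.ne_iff]
    exact Fin.succ_ne_zero j)
  invFun j := (e.symm j.succ).pred (by
    rw [← e.symm_apply_eq.mpr he.symm, e.symm.injective.ne_iff]
    exact Fin.succ_ne_zero j)
  left_inv j := by simp
  right_inv j := by simp

@[simp]
theorem Fin.succ_tailEquiv_apply {n m : ℕ} (e : Fin (n + 1) ≃ Fin (m + 1)) (he : e 0 = 0)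
    (j : Fin n) : (Fin.tailEquiv e he j).succ = e j.succ := by
  simp [Fin.tailEquiv]

theorem wordRel_le {l : List ℕ} {j k : Fin l.length} (h : wordRel l j k) : j ≤ k := by
  induction h with
  | refl => exact le_rfl
  | tail _ hstep ih => exact ih.trans hstep.1

@[simp]
theorem wordRel_cons_succ_iff {a : ℕ} {t : List ℕ} {j k : Fin t.length} :
    wordRel (a :: t) j.succ k.succ ↔ wordRel t j k := by
  unfold wordRel
  rw [Fin.reflTransGen_succ_iff fun _ _ h => h.1]
  simp only [Fin.succ_le_succ_iff, List.get_cons_succ']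

theorem wordRel.map {l l' : List ℕ} {f : Fin l.length → Fin l'.length}
    (hf : ∀ j, l'.get (f j) = l.get j)
    (hmono : ∀ j k, j ≤ k → l.get j ≤ l.get k + 1 → l.get k ≤ l.get j + 1 → f j ≤ f k)
    {j k : Fin l.length} (h : wordRel l j k) : wordRel l' (f j) (f k) :=
  ReflTransGen.lift f (fun x y ⟨hxy, h₁, h₂⟩ =>
    ⟨hmono x y hxy h₁ h₂, by rwa [hf, hf], by rwa [hf, hf]⟩) _ _ h

theorem CommMove.symm {l l' : List ℕ} : CommMove l l' → CommMove l' l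
  | ⟨u, v, a, b, hab, h, h'⟩ => ⟨u, v, b, a, hab.symm, h', h⟩

instance : Std.Symm CommMove := ⟨fun _ _ => CommMove.symm⟩

theorem CommEquiv.symm {l l' : List ℕ} (h : CommEquiv l l') : CommEquiv l' l :=
  Std.Symm.symm (r := ReflTransGen CommMove) _ _ h

theorem CommEquiv.cons (a : ℕ) {t t' : List ℕ} (h : CommEquiv t t') :
    CommEquiv (a :: t) (a :: t') :=
  ReflTransGen.lift (a :: ·) (fun _ _ ⟨u, v, b, c, hbc, h, h'⟩ =>
    ⟨a :: u, v, b, c, hbc, by simp [h], by simp [h']⟩) _ _ h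

theorem commEquiv_append_cons {a : ℕ} {v : List ℕ} :
    ∀ {u : List ℕ}, (∀ x ∈ u, x + 1 < a ∨ a + 1 < x) → CommEquiv (u ++ a :: v) (a :: (u ++ v))
  | [], _ => .refl
  | c :: u, hu =>
    (CommEquiv.cons c (commEquiv_append_cons fun x hx => hu x (by simp [hx]))).tail
      ⟨[], u ++ v, c, a, hu c (by simp), rfl, rfl⟩

structure WordPosetEquiv (l l' : List ℕ) where
  toEquiv : Fin l.length ≃ Fin l'.length
  get_apply (j : Fin l.length) : l'.get (toEquiv j) = l.get j
  wordRel_iff (j k : Fin l.length) : wordRel l j k ↔ wordRel l' (toEquiv j) (toEquiv k)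

namespace WordPosetEquiv

variable {l l' l'' : List ℕ}

instance : CoeFun (WordPosetEquiv l l') fun _ => Fin l.length → Fin l'.length :=
  ⟨fun e => e.toEquiv⟩

def refl (l : List ℕ) : WordPosetEquiv l l :=
  ⟨Equiv.refl _, fun _ => rfl, fun _ _ => Iff.rfl⟩

def trans (e : WordPosetEquiv l l') (e' : WordPosetEquiv l' l'') : WordPosetEquiv l l'' :=
  ⟨e.toEquiv.trans e'.toEquiv, fun j => (e'.get_apply _).trans (e.get_apply j),
    fun j k => (e.wordRel_iff j k).trans (e'.wordRel_iff _ _)⟩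

def ofEquiv (e : Fin l.length ≃ Fin l'.length) (he : ∀ j, l'.get (e j) = l.get j)
    (hmono : ∀ j k, j ≤ k → l.get j ≤ l.get k + 1 → l.get k ≤ l.get j + 1 → e j ≤ e k)
    (hmono' : ∀ j k, e j ≤ e k → l.get j ≤ l.get k + 1 → l.get k ≤ l.get j + 1 → j ≤ k) :
    WordPosetEquiv l l' where
  toEquiv := e
  get_apply := he
  wordRel_iff j k := by
    refine ⟨wordRel.map he hmono, fun h => ?_⟩
    have he' : ∀ j, l.get (e.symm j) = l'.get j := fun j => by rw [← he, e.apply_symm_apply]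
    simpa using wordRel.map he' (fun j k hjk h₁ h₂ => hmono' _ _ (by simpa using hjk)
      (by rwa [he', he']) (by rwa [he', he'])) h

def commMove (u v : List ℕ) {a b : ℕ} (hab : a + 1 < b ∨ b + 1 < a) :
    WordPosetEquiv (u ++ a :: b :: v) (u ++ b :: a :: v) :=
  ofEquiv ((Equiv.swap ⟨u.length, by simp⟩ ⟨u.length + 1, by simp⟩).trans (finCongr (by simp)))
    (fun j => by
      simp only [Equiv.trans_apply, finCongr_apply, List.get_eq_getElem, Fin.val_cast,
        Equiv.swap_apply_def]
      split_ifs with h₁ h₂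
      · simp [h₁]
      · simp [h₂]
      · simp only [Fin.ext_iff] at h₁ h₂
        simp only [List.getElem_append, List.getElem_cons]
        split_ifs <;> first | rfl | omega)
    (fun j k hjk h₁ h₂ => Fin.swap_le_swap_of_val_eq_succ rfl hjk (by
      rintro ⟨rfl, rfl⟩
      simp at h₁ h₂
      omega))
    (fun j k hjk h₁ h₂ => Fin.le_of_swap_le_swap_of_val_eq_succ rfl hjk (by
      rintro ⟨rfl, rfl⟩
      simp at h₁ h₂
      omega))

theorem far_of_lt_apply_zero {a : ℕ} {t : List ℕ} (e : WordPosetEquiv (a :: t) l')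
    {j : Fin l'.length} (hj : j < e 0) : l'.get j + 1 < a ∨ a + 1 < l'.get j := by
  by_contra! hclose
  obtain ⟨i, rfl⟩ := e.toEquiv.surjective j
  have h0 : l'.get (e 0) = a := e.get_apply 0
  have hrel : wordRel l' (e i) (e 0) := .single ⟨hj.le, by omega, by omega⟩
  have hi : i = 0 := nonpos_iff_eq_zero.mp (wordRel_le ((e.wordRel_iff i 0).mpr hrel))
  exact hj.ne (congrArg e hi)

theorem apply_zero {a : ℕ} {t t' : List ℕ} (e : WordPosetEquiv (a :: t) (a :: t')) :
    e 0 = 0 := by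
  by_contra h
  have := e.far_of_lt_apply_zero (j := 0) (Fin.pos_iff_ne_zero.mpr h)
  simp at this

def tail {a : ℕ} {t t' : List ℕ} (e : WordPosetEquiv (a :: t) (a :: t')) :
    WordPosetEquiv t t' where
  toEquiv := Fin.tailEquiv e.toEquiv e.apply_zero
  get_apply j := by
    have h := e.get_apply j.succ
    rwa [← Fin.succ_tailEquiv_apply e.toEquiv e.apply_zero] at h
  wordRel_iff j k := by
    rw [← wordRel_cons_succ_iff (a := a) (t := t), ← wordRel_cons_succ_iff (a := a) (t := t'),
      Fin.succ_tailEquiv_apply, Fin.succ_tailEquiv_apply]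
    exact e.wordRel_iff j.succ k.succ

theorem exists_eq_append_cons {a : ℕ} {t : List ℕ} (e : WordPosetEquiv (a :: t) l') :
    ∃ u v, l' = u ++ a :: v ∧ ∀ x ∈ u, x + 1 < a ∨ a + 1 < x := by
  set p := e 0
  refine ⟨l'.take p, l'.drop (p + 1), ?_, fun x hx => ?_⟩
  · have hp : l'[(p : ℕ)] = a := e.get_apply 0
    rw [← hp, List.getElem_cons_drop, List.take_append_drop]
  · obtain ⟨i, hi, rfl⟩ := List.mem_take_iff_getElem.mp hx
    exact e.far_of_lt_apply_zero (j := ⟨i, by omega⟩) (Fin.lt_def.mpr (by simp at hi; omega))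

theorem nonempty_iff {l l' : List ℕ} :
    Nonempty (WordPosetEquiv l l') ↔
      ∃ e : Fin l.length ≃ Fin l'.length,
        (∀ j, l'.get (e j) = l.get j) ∧ (∀ j k, wordRel l j k ↔ wordRel l' (e j) (e k)) :=
  ⟨fun ⟨e⟩ => ⟨e.toEquiv, e.get_apply, e.wordRel_iff⟩, fun ⟨e, he, hrel⟩ => ⟨⟨e, he, hrel⟩⟩⟩

end WordPosetEquiv

theorem CommMove.nonempty_wordPosetEquiv {l l' : List ℕ} :
    CommMove l l' → Nonempty (WordPosetEquiv l l')
  | ⟨u, v, _, _, hab, hl, hl'⟩ => hl ▸ hl' ▸ ⟨WordPosetEquiv.commMove u v hab⟩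

theorem CommEquiv.nonempty_wordPosetEquiv {l l' : List ℕ} (h : CommEquiv l l') :
    Nonempty (WordPosetEquiv l l') := by
  induction h with
  | refl => exact ⟨.refl _⟩
  | tail _ hmove ih => exact ⟨ih.some.trans hmove.nonempty_wordPosetEquiv.some⟩

theorem CommEquiv.of_wordPosetEquiv : ∀ {l l' : List ℕ}, WordPosetEquiv l l' → CommEquiv l l'
  | [], [], _ => .refl
  | [], _ :: _, e => (e.toEquiv.symm 0).elim0
  | a :: t, _, e => by
    obtain ⟨u, v, rfl, hu⟩ := e.exists_eq_append_cons
    have hmove : CommEquiv (u ++ a :: v) (a :: (u ++ v)) := commEquiv_append_cons hu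
    obtain ⟨e'⟩ := hmove.nonempty_wordPosetEquiv
    exact ((of_wordPosetEquiv (e.trans e').tail).cons a).trans hmove.symm

theorem commEquiv_iff_nonempty_wordPosetEquiv {l l' : List ℕ} :
    CommEquiv l l' ↔ Nonempty (WordPosetEquiv l l') :=
  ⟨CommEquiv.nonempty_wordPosetEquiv, fun ⟨e⟩ => .of_wordPosetEquiv e⟩

theorem commEquiv_iff_wordPoset_iso_general (l l' : List ℕ) :
    CommEquiv l l' ↔
      ∃ e : Fin l.length ≃ Fin l'.length,
        (∀ j, l'.get (e j) = l.get j) ∧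
        (∀ j k, wordRel l j k ↔ wordRel l' (e j) (e k)) :=
  commEquiv_iff_nonempty_wordPosetEquiv.trans WordPosetEquiv.nonempty_iff

/-- Two reduced words of `w` are related by a sequence of 2-moves if and only if
their word posets are isomorphic as labeled posets. -/
theorem commEquiv_iff_wordPoset_iso (n : ℕ) (w : Equiv.Perm (Fin (n + 1)))
    (l l' : List ℕ) (h : IsReducedWord n w l) (h' : IsReducedWord n w l') :
    CommEquiv l l' ↔
      ∃ e : Fin l.length ≃ Fin l'.length,
        (∀ j, l'.get (e j) = l.get j) ∧
        (∀ j k, wordRel l j k ↔ wordRel l' (e j) (e k)) :=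
  commEquiv_iff_wordPoset_iso_general l l'
end
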